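/- For each j ∈ {1, 3}, the quotient of the free associative k-algebra on generators x, y by the two-sided ideal generated by x^2, yx + ξ^j·xy, and y^4 has dimension 8 over k, with linear basis {x^m y^n : m ∈ {0,1}, 0 ≤ n ≤ 3}. (This algebra is the Nichols algebra B(V_{2,j}).) -/

import Mathlib

noncomputable section

/-- Generators of the Nichols algebra `B(V_{2,j})`. -/
inductive NGen : Type
  | x | y

variable (k : Type) [Field k] (ξ : k) (j : ℕ)

namespace NGen

/-- Shorthand for the generator `x` of the free algebra. -/
abbrev X : FreeAlgebra k NGen := FreeAlgebra.ι k NGen.x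
/-- Shorthand for the generator `y` of the free algebra. -/
abbrev Y : FreeAlgebra k NGen := FreeAlgebra.ι k NGen.y

end NGen

open NGen

/-- The defining relations of `B(V_{2,j})`: `x² = 0`, `yx + ξʲ·xy = 0`, `y⁴ = 0`. -/
inductive NRel : FreeAlgebra k NGen → FreeAlgebra k NGen → Prop
  | r1 : NRel (X k ^ 2) 0
  | r2 : NRel (Y k * X k + (ξ ^ j) • (X k * Y k)) 0
  | r3 : NRel (Y k ^ 4) 0

/-- The Nichols algebra `B(V_{2,j})` as an algebra. -/
abbrev NAlg : Type := RingQuot (NRel k ξ j)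

/-- The image of `x` in the quotient. -/
def xN : NAlg k ξ j := RingQuot.mkAlgHom k (NRel k ξ j) (X k)
/-- The image of `y` in the quotient. -/
def yN : NAlg k ξ j := RingQuot.mkAlgHom k (NRel k ξ j) (Y k)

/-!
The monomials `xᵐ yⁿ` (`m < 2`, `n < 4`) span: the relations `x² = 0`, `y⁴ = 0` and
`y x = -ξʲ x y` rewrite every word into a multiple of one of them. They are linearly independent
because the relations hold for the matrices `x ↦ S₂ ⊗ 1`, `y ↦ diag(1, -ξʲ) ⊗ S₄` on `k² ⊗ k⁴`,
where `Sₙ` is the nilpotent shift `eᵢ ↦ eᵢ₊₁`: the image of `xᵐ yⁿ` sends `e₀ ⊗ e₀` to `eₘ ⊗ eₙ`.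
-/

open Matrix Kronecker

section ShiftMatrix

variable (R : Type*) [CommSemiring R]

def shiftMatrix (n : ℕ) : Matrix (Fin n) (Fin n) R :=
  of fun i l => if (i : ℕ) = l + 1 then 1 else 0

variable {R}

theorem shiftMatrix_pow_apply {n : ℕ} (e : ℕ) (i l : Fin n) :
    (shiftMatrix R n ^ e) i l = if (i : ℕ) = l + e then 1 else 0 := by
  induction e generalizing i with
  | zero => simp [one_apply, Fin.ext_iff]
  | succ e ih =>
    rw [pow_succ', mul_apply]
    by_cases h : (l : ℕ) + e < n
    · rw [Finset.sum_eq_single ⟨l + e, h⟩]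
      · rw [ih]
        simp [shiftMatrix, add_assoc]
      · intro m _ hm
        simp [ih, Fin.ext_iff] at hm ⊢
        omega
      · simp
    · refine (Finset.sum_eq_zero fun m _ => ?_).trans (if_neg (by omega)).symm
      simp [ih]
      omega

theorem shiftMatrix_pow_self (n : ℕ) : shiftMatrix R n ^ n = 0 := by
  ext i l
  rw [shiftMatrix_pow_apply, if_neg (by omega), Matrix.zero_apply]

end ShiftMatrix

theorem Matrix.kronecker_pow {R l m : Type*} [CommSemiring R] [Fintype l] [Fintype m]
    [DecidableEq l] [DecidableEq m] (A : Matrix l l R) (B : Matrix m m R) (e : ℕ) :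
    (A ⊗ₖ B) ^ e = (A ^ e) ⊗ₖ (B ^ e) := by
  induction e with
  | zero => simp
  | succ e ih => rw [pow_succ, ih, ← mul_kronecker_mul, ← pow_succ, ← pow_succ]

namespace TruncatedQuantumPlane

variable (R : Type*) [CommSemiring R] (a b : ℕ) (c : R)

def repX : Matrix (Fin a × Fin b) (Fin a × Fin b) R := shiftMatrix R a ⊗ₖ 1

def repY : Matrix (Fin a × Fin b) (Fin a × Fin b) R :=
  diagonal (fun i : Fin a => c ^ (i : ℕ)) ⊗ₖ shiftMatrix R b

theorem repX_pow_self : repX R a b ^ a = 0 := by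
  rw [repX, kronecker_pow, shiftMatrix_pow_self, zero_kronecker]

theorem repY_pow_self : repY R a b c ^ b = 0 := by
  rw [repY, kronecker_pow, shiftMatrix_pow_self, kronecker_zero]

theorem diagonal_mul_shiftMatrix :
    diagonal (fun i : Fin a => c ^ (i : ℕ)) * shiftMatrix R a
      = c • (shiftMatrix R a * diagonal (fun i : Fin a => c ^ (i : ℕ))) := by
  ext i l
  simp only [diagonal_mul, Matrix.smul_apply, shiftMatrix, of_apply]
  split_ifs with h <;> simp [h, pow_succ]
  ring

theorem repY_mul_repX : repY R a b c * repX R a b = c • (repX R a b * repY R a b c) := by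
  rw [repX, repY, ← mul_kronecker_mul, ← mul_kronecker_mul, diagonal_mul_shiftMatrix,
    smul_kronecker, mul_one, one_mul]

theorem repX_pow_mul_repY_pow_apply_zero [NeZero a] [NeZero b] (m n : ℕ) (i : Fin a)
    (i' : Fin b) :
    (repX R a b ^ m * repY R a b c ^ n) (i, i') (0, 0)
      = if (i : ℕ) = m ∧ (i' : ℕ) = n then 1 else 0 := by
  rw [repX, repY, kronecker_pow, kronecker_pow, ← mul_kronecker_mul, one_pow, one_mul,
    diagonal_pow, kronecker_apply, mul_diagonal, shiftMatrix_pow_apply, shiftMatrix_pow_apply]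
  split_ifs <;> simp_all

theorem linearIndependent_repX_pow_mul_repY_pow [NeZero a] [NeZero b] :
    LinearIndependent R fun p : Fin a × Fin b =>
      repX R a b ^ (p.1 : ℕ) * repY R a b c ^ (p.2 : ℕ) := by
  refine LinearIndependent.of_comp (LinearMap.pi fun q => entryLinearMap R R q (0, 0)) ?_
  have hcol : (LinearMap.pi fun q => entryLinearMap R R q (0, 0)) ∘
      (fun p : Fin a × Fin b => repX R a b ^ (p.1 : ℕ) * repY R a b c ^ (p.2 : ℕ))
        = fun p => Pi.single p 1 := by
    ext ⟨m, n⟩ ⟨i, i'⟩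
    simp [repX_pow_mul_repY_pow_apply_zero, Pi.single_apply, Prod.ext_iff, Fin.ext_iff]
  rw [hcol]
  exact Pi.linearIndependent_single_one _ R

end TruncatedQuantumPlane

section Spanning

variable {R A : Type*} [CommSemiring R] [Semiring A] [Algebra R A] {x y : A} {c : R}

theorem mul_pow_eq_smul_pow_mul (hyx : y * x = c • (x * y)) (m : ℕ) :
    y * x ^ m = c ^ m • (x ^ m * y) := by
  induction m with
  | zero => simp
  | succ m ih =>
    rw [pow_succ, ← mul_assoc, ih, smul_mul_assoc, mul_assoc, hyx, mul_smul_comm, smul_smul,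
      ← mul_assoc, pow_succ]

theorem span_pow_mul_pow_eq_top {a b : ℕ} (hgen : Algebra.adjoin R {x, y} = ⊤)
    (hx : x ^ a = 0) (hy : y ^ b = 0) (hyx : y * x = c • (x * y)) :
    Submodule.span R (Set.range fun p : Fin a × Fin b => x ^ (p.1 : ℕ) * y ^ (p.2 : ℕ)) = ⊤ := by
  set W := Submodule.span R (Set.range fun p : Fin a × Fin b => x ^ (p.1 : ℕ) * y ^ (p.2 : ℕ))
  have hmono : ∀ m n : ℕ, x ^ m * y ^ n ∈ W := by
    intro m n
    by_cases hm : m < a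
    · by_cases hn : n < b
      · exact Submodule.subset_span ⟨(⟨m, hm⟩, ⟨n, hn⟩), rfl⟩
      · rw [pow_eq_zero_of_le (not_lt.mp hn) hy, mul_zero]
        exact W.zero_mem
    · rw [pow_eq_zero_of_le (not_lt.mp hm) hx, zero_mul]
      exact W.zero_mem
  have hstable : ∀ s ∈ ({x, y} : Set A), ∀ w ∈ W, s * w ∈ W := by
    rintro s hs w hw
    induction hw using Submodule.span_induction with
    | mem _ hw =>
      obtain ⟨⟨m, n⟩, rfl⟩ := hw
      rcases hs with rfl | rfl
      · rw [← mul_assoc, ← pow_succ']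
        exact hmono _ _
      · rw [← mul_assoc, mul_pow_eq_smul_pow_mul hyx, smul_mul_assoc, mul_assoc, ← pow_succ']
        exact W.smul_mem _ (hmono _ _)
    | zero => simp
    | add _ _ _ _ hv hw => simpa [mul_add] using W.add_mem hv hw
    | smul r _ _ hw => simpa [mul_smul_comm] using W.smul_mem r hw
  have hclosure : (Submonoid.closure {x, y} : Set A) ⊆ W := fun z hz => by
    induction hz using Submonoid.closure_induction_left with
    | one => simpa using hmono 0 0
    | mul_left s hs w _ hw => exact hstable s hs w hw
  rw [eq_top_iff, ← Algebra.top_toSubmodule, ← hgen, Algebra.adjoin_eq_span]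
  exact Submodule.span_le.mpr hclosure

end Spanning

theorem xN_sq : xN k ξ j ^ 2 = 0 := by
  rw [xN, ← map_pow, RingQuot.mkAlgHom_rel k NRel.r1, map_zero]

theorem yN_pow_four : yN k ξ j ^ 4 = 0 := by
  rw [yN, ← map_pow, RingQuot.mkAlgHom_rel k NRel.r3, map_zero]

theorem yN_mul_xN : yN k ξ j * xN k ξ j = (-ξ ^ j) • (xN k ξ j * yN k ξ j) := by
  have h := RingQuot.mkAlgHom_rel k (NRel.r2 (k := k) (ξ := ξ) (j := j))
  rw [map_add, map_mul, map_smul, map_mul, map_zero, ← xN, ← yN, ← eq_neg_iff_add_eq_zero] at h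
  exact h.trans (neg_smul (ξ ^ j) (xN k ξ j * yN k ξ j)).symm

theorem adjoin_xN_yN : Algebra.adjoin k {xN k ξ j, yN k ξ j} = ⊤ := by
  have hrange : Set.range (FreeAlgebra.ι k : NGen → FreeAlgebra k NGen) = {X k, Y k} := by
    ext g
    constructor
    · rintro ⟨_ | _, rfl⟩ <;> simp
    · rintro (rfl | rfl) <;> exact ⟨_, rfl⟩
  rw [xN, yN, ← Set.image_pair, ← hrange, Algebra.adjoin_image, FreeAlgebra.adjoin_range_ι,
    Algebra.map_top, AlgHom.range_eq_top]
  exact RingQuot.mkAlgHom_surjective k _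

theorem NAlg.exists_algHom {B : Type*} [Semiring B] [Algebra k B] {u v : B} (hu : u ^ 2 = 0)
    (huv : v * u + ξ ^ j • (u * v) = 0) (hv : v ^ 4 = 0) :
    ∃ f : NAlg k ξ j →ₐ[k] B, f (xN k ξ j) = u ∧ f (yN k ξ j) = v := by
  let g : FreeAlgebra k NGen →ₐ[k] B := FreeAlgebra.lift k fun | .x => u | .y => v
  have hg : ∀ ⦃a b⦄, NRel k ξ j a b → g a = g b := by
    rintro _ _ (_ | _ | _) <;> simpa [g]
  refine ⟨RingQuot.liftAlgHom k ⟨g, hg⟩, ?_, ?_⟩ <;>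
    simp [xN, yN, g, RingQuot.liftAlgHom_mkAlgHom_apply]

open TruncatedQuantumPlane in
theorem linearIndependent_xN_pow_mul_yN_pow :
    LinearIndependent k fun p : Fin 2 × Fin 4 => xN k ξ j ^ (p.1 : ℕ) * yN k ξ j ^ (p.2 : ℕ) := by
  have hrel :
      repY k 2 4 (-ξ ^ j) * repX k 2 4 + ξ ^ j • (repX k 2 4 * repY k 2 4 (-ξ ^ j)) = 0 := by
    rw [repY_mul_repX, neg_smul, neg_add_cancel]
  obtain ⟨f, hfx, hfy⟩ :=
    NAlg.exists_algHom k ξ j (repX_pow_self k 2 4) hrel (repY_pow_self k 2 4 (-ξ ^ j))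
  refine LinearIndependent.of_comp f.toLinearMap ?_
  have hcomp :
      ⇑f.toLinearMap ∘ (fun p : Fin 2 × Fin 4 => xN k ξ j ^ (p.1 : ℕ) * yN k ξ j ^ (p.2 : ℕ))
        = fun p => repX k 2 4 ^ (p.1 : ℕ) * repY k 2 4 (-ξ ^ j) ^ (p.2 : ℕ) :=
    funext fun p => by simp [hfx, hfy]
  rw [hcomp]
  exact linearIndependent_repX_pow_mul_repY_pow k 2 4 (-ξ ^ j)

theorem stmt_11_general (k : Type) [Field k] (ξ : k) (j : ℕ) :
    Module.finrank k (NAlg k ξ j) = 8 ∧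
    ∃ B : Module.Basis (Fin 2 × Fin 4) k (NAlg k ξ j),
      ∀ (m : Fin 2) (n : Fin 4), B (m, n) = xN k ξ j ^ (m : ℕ) * yN k ξ j ^ (n : ℕ) := by
  have hli := linearIndependent_xN_pow_mul_yN_pow k ξ j
  have hspan := span_pow_mul_pow_eq_top (adjoin_xN_yN k ξ j) (xN_sq k ξ j) (yN_pow_four k ξ j)
    (yN_mul_xN k ξ j)
  let B := Module.Basis.mk hli hspan.ge
  refine ⟨?_, B, fun m n => Module.Basis.mk_apply hli hspan.ge (m, n)⟩
  rw [Module.finrank_eq_card_basis B]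
  rfl

/-- For `j ∈ {1,3}`, the quotient of the free algebra on `x, y` by the relations
`x² = 0`, `yx + ξʲ·xy = 0`, `y⁴ = 0` is 8-dimensional, with linear basis
`{xᵐ yⁿ : m ∈ {0,1}, 0 ≤ n ≤ 3}`. -/
theorem stmt_11 (k : Type) [Field k] [IsAlgClosed k] [CharZero k] (ξ : k)
    (hξ : IsPrimitiveRoot ξ 4) (j : ℕ) (hj : j = 1 ∨ j = 3) :
    Module.finrank k (NAlg k ξ j) = 8 ∧
    ∃ B : Module.Basis (Fin 2 × Fin 4) k (NAlg k ξ j),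
      ∀ (m : Fin 2) (n : Fin 4), B (m, n) = xN k ξ j ^ (m : ℕ) * yN k ξ j ^ (n : ℕ) :=
  stmt_11_general k ξ j

end
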